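/- arXiv:2408.04134 — 8 statements merged into one kernel-verified Lean document; each statement's English description precedes it below -/
import Mathlib

section
/- Let l be a positive integer and D ∈ Mat_l(ℤ) a diagonal matrix with diagonal entries d_1, ..., d_l, where d_1 = ... = d_r = 1 and the remaining diagonal entries are powers of a prime p greater than 1. Then in the ring Mat_l(ℤ)_D (matrices with multiplication A ·_D B = ADB), the matrix units E_11, ..., E_rr form a set of r pairwise orthogonal primitive idempotents. -/
/-!
Since `e = E_ii` absorbs `D` on both sides (`d i = 1`), any decomposition `e = f + g` into
orthogonal `D`-idempotents has `f = e f e` and `g = e g e`, and on this corner the `D`-product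
is the ordinary one: `f D g = f g`. The corner `E_ii · Mat_l(ℤ) · E_ii` is `ℤ · E_ii`,
which has no zero divisors, so `f D g = 0` forces `f = 0` or `g = 0`.
-/

section OrthogonalDecomposition

variable {R : Type*} [NonUnitalSemiring R] {c e f g : R}

theorem mul_eq_right_of_eq_add (hec : e * c = e) (he : e = f + g) (hff : f * c * f = f)
    (hgf : g * c * f = 0) : e * f = f :=
  calc e * f = e * c * f := by rw [hec]
    _ = f := by rw [he, add_mul, add_mul, hff, hgf, add_zero]

theorem mul_eq_left_of_eq_add (hce : c * e = e) (he : e = f + g) (hff : f * c * f = f)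
    (hfg : f * c * g = 0) : f * e = f :=
  calc f * e = f * c * e := by rw [mul_assoc, hce]
    _ = f := by rw [he, mul_add, hff, hfg, add_zero]

theorem mul_mul_eq_of_eq_add (hec : e * c = e) (hce : c * e = e) (he : e = f + g)
    (hff : f * c * f = f) (hfg : f * c * g = 0) (hgf : g * c * f = 0) : e * f * e = f := by
  rw [mul_eq_right_of_eq_add hec he hff hgf, mul_eq_left_of_eq_add hce he hff hfg]

theorem mul_mul_eq_mul_of_mul_eq (hec : e * c = e) (hfe : f * e = f) : f * c * g = f * g := by
  rw [← hfe, mul_assoc f e c, hec]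

end OrthogonalDecomposition

namespace Matrix

variable {n α : Type*} [Fintype n] [DecidableEq n]

theorem single_mul_diagonal [NonUnitalNonAssocSemiring α] (i j : n) (a : α) (d : n → α) :
    single i j a * diagonal d = single i j (a * d j) := by
  ext k k'
  rw [mul_diagonal]
  obtain rfl | hk := eq_or_ne i k
  · obtain rfl | hk' := eq_or_ne j k'
    · simp
    · simp [single_apply_of_col_ne _ _ hk']
  · simp [single_apply_of_row_ne hk]

theorem diagonal_mul_single [NonUnitalNonAssocSemiring α] (i j : n) (a : α) (d : n → α) :
    diagonal d * single i j a = single i j (d i * a) := by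
  ext k k'
  rw [diagonal_mul]
  obtain rfl | hk := eq_or_ne i k
  · obtain rfl | hk' := eq_or_ne j k'
    · simp
    · simp [single_apply_of_col_ne _ _ hk']
  · simp [single_apply_of_row_ne hk]

theorem not_exists_orthogonal_decomposition_single [Semiring α] [NoZeroDivisors α]
    (c : Matrix n n α) (i : n) (hec : single i i 1 * c = single i i 1)
    (hce : c * single i i 1 = single i i 1) :
    ¬ ∃ f g : Matrix n n α, f ≠ 0 ∧ g ≠ 0 ∧
      f * c * f = f ∧ g * c * g = g ∧ f * c * g = 0 ∧ g * c * f = 0 ∧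
      single i i 1 = f + g := by
  rintro ⟨f, g, hf, hg, hff, hgg, hfg, hgf, he⟩
  have hf_eq : f = single i i (f i i) := by
    simpa using (mul_mul_eq_of_eq_add hec hce he hff hfg hgf).symm
  have hg_eq : g = single i i (g i i) := by
    simpa using (mul_mul_eq_of_eq_add hec hce (he.trans (add_comm f g)) hgg hgf hfg).symm
  have hfe : f * single i i 1 = f := by rw [hf_eq, single_mul_single_same, mul_one]
  have hprod : f i i * g i i = 0 := by
    have := congrFun (congrFun (mul_mul_eq_mul_of_mul_eq hec hfe ▸ hfg) i) i
    rwa [hf_eq, hg_eq, single_mul_single_same, single_apply_same] at this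
  rcases mul_eq_zero.mp hprod with h | h
  · exact hf (by rw [hf_eq, h, single_zero])
  · exact hg (by rw [hg_eq, h, single_zero])

end Matrix

theorem stmt1_general {l : ℕ} (r : ℕ)
    (d : Fin l → ℤ) (hd1 : ∀ i : Fin l, (i : ℕ) < r → d i = 1)
    (D : Matrix (Fin l) (Fin l) ℤ) (hD : D = Matrix.diagonal d) :
    (∀ i : Fin l, (i : ℕ) < r →
      Matrix.single i i (1 : ℤ) * D * Matrix.single i i 1 =
        Matrix.single i i 1) ∧
    (∀ i j : Fin l, (i : ℕ) < r → (j : ℕ) < r → i ≠ j →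
      Matrix.single i i (1 : ℤ) * D * Matrix.single j j 1 = 0) ∧
    (∀ i : Fin l, (i : ℕ) < r →
      ¬ ∃ f g : Matrix (Fin l) (Fin l) ℤ, f ≠ 0 ∧ g ≠ 0 ∧
        f * D * f = f ∧ g * D * g = g ∧ f * D * g = 0 ∧ g * D * f = 0 ∧
        Matrix.single i i (1 : ℤ) = f + g) := by
  subst hD
  have hED (i : Fin l) (hi : (i : ℕ) < r) :
      Matrix.single i i (1 : ℤ) * Matrix.diagonal d = Matrix.single i i 1 := by
    rw [Matrix.single_mul_diagonal, hd1 i hi, one_mul]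
  refine ⟨fun i hi => ?_, fun i j hi _ hij => ?_, fun i hi => ?_⟩
  · rw [hED i hi, Matrix.single_mul_single_same, one_mul]
  · rw [hED i hi, Matrix.single_mul_single_of_ne (h := hij)]
  · refine Matrix.not_exists_orthogonal_decomposition_single _ i (hED i hi) ?_
    rw [Matrix.diagonal_mul_single, hd1 i hi, one_mul]

/-- Let `D` be the diagonal integer matrix with diagonal entries
`d 1, …, d l`, where the first `r` entries equal `1` and the remaining ones are powers
of a prime `p` greater than `1`.  Then in the ring `Mat_l(ℤ)_D` (multiplication
`A ·_D B = A * D * B`) the matrix units `E₁₁, …, E_rr` are pairwise orthogonal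
primitive idempotents. -/
theorem stmt1 {l : ℕ} (hl : 0 < l) (p : ℕ) (hp : p.Prime) (r : ℕ) (hr : r ≤ l)
    (d : Fin l → ℤ) (hd1 : ∀ i : Fin l, (i : ℕ) < r → d i = 1)
    (hdp : ∀ i : Fin l, r ≤ (i : ℕ) → ∃ k : ℕ, 1 ≤ k ∧ d i = (p : ℤ) ^ k)
    (D : Matrix (Fin l) (Fin l) ℤ) (hD : D = Matrix.diagonal d) :
    (∀ i : Fin l, (i : ℕ) < r →
      Matrix.single i i (1 : ℤ) * D * Matrix.single i i 1 =
        Matrix.single i i 1) ∧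
    (∀ i j : Fin l, (i : ℕ) < r → (j : ℕ) < r → i ≠ j →
      Matrix.single i i (1 : ℤ) * D * Matrix.single j j 1 = 0) ∧
    (∀ i : Fin l, (i : ℕ) < r →
      ¬ ∃ f g : Matrix (Fin l) (Fin l) ℤ, f ≠ 0 ∧ g ≠ 0 ∧
        f * D * f = f ∧ g * D * g = g ∧ f * D * g = 0 ∧ g * D * f = 0 ∧
        Matrix.single i i (1 : ℤ) = f + g) :=
  stmt1_general r d hd1 D hD
end

section
/- Let l be a positive integer, p a prime, and D ∈ Mat_l(ℤ) a diagonal matrix whose diagonal entries d_1, ..., d_l are powers of p with exactly r of them equal to 1. If E_1, ..., E_s are pairwise orthogonal nonzero idempotents of the ring Mat_l(ℤ)_D (with multiplication A ·_D B = ADB), then s ≤ r. -/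
/-!
Reduce modulo `p`. If `E = E D E` and `p` divides every entry of `E`, then so does every
power of `p`, hence `E = 0`; so the reductions `F i` of the `E i` are pairwise orthogonal
nonzero idempotents of `Mat_l(𝔽_p)_D̄`, where `D̄` is the `0/1` diagonal matrix of rank `r`.
Over a field, choosing `u i` with `F i u i ≠ 0`, the vectors `D̄ F i u i` are nonzero, lie in
the range of `D̄`, and `D̄ F j` acts on them as the `j`-th coordinate projection, so they are
linearly independent.
-/

open Module

section OrthogonalFamilies

variable {K V ι : Type*} [Field K] [AddCommGroup V] [Module K V]

theorem linearIndependent_of_apply_eq_ite [DecidableEq ι] {w : ι → V} (φ : ι → End K V)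
    (hφ : ∀ i j, φ i (w j) = if i = j then w j else 0) (hw : ∀ i, w i ≠ 0) :
    LinearIndependent K w := by
  rw [linearIndependent_iff']
  intro t g hsum i hi
  have : g i • w i = 0 := by
    simpa [map_sum, hφ, Finset.sum_ite_eq, hi] using congrArg (φ i) hsum
  exact (smul_eq_zero.mp this).resolve_right (hw i)

theorem card_le_finrank_range_of_mul_mul_eq_ite [Fintype ι] [DecidableEq ι]
    [FiniteDimensional K V] (P : End K V) (f : ι → End K V)
    (hf : ∀ i j, f i * P * f j = if i = j then f i else 0) (hne : ∀ i, f i ≠ 0) :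
    Fintype.card ι ≤ finrank K (LinearMap.range P) := by
  choose u hu using fun i => DFunLike.ne_iff.mp (hne i)
  have hPf : ∀ i j, (P * f i) (P (f j (u j))) = if i = j then P (f j (u j)) else 0 := by
    intro i j
    have := congrArg (fun g : End K V => P (g (u j))) (hf i j)
    split_ifs at this ⊢ with h <;> simpa [h] using this
  have hw : ∀ i, P (f i (u i)) ≠ 0 := fun i h => hu i <| by
    simpa [h] using (congrArg (fun g : End K V => g (u i)) (hf i i)).symm
  have hli := linearIndependent_of_apply_eq_ite _ hPf hw
  calc Fintype.card ι = finrank K (Submodule.span K (Set.range fun i => P (f i (u i)))) :=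
        (finrank_span_eq_card hli).symm
    _ ≤ finrank K (LinearMap.range P) :=
        Submodule.finrank_mono <| Submodule.span_le.mpr <| Set.range_subset_iff.mpr
          fun i => LinearMap.mem_range_self P _

theorem Matrix.card_le_rank_of_mul_mul_eq_ite {n : Type*} [Fintype n] [DecidableEq n]
    [Fintype ι] [DecidableEq ι] (P : Matrix n n K) (F : ι → Matrix n n K)
    (hF : ∀ i j, F i * P * F j = if i = j then F i else 0) (hne : ∀ i, F i ≠ 0) :
    Fintype.card ι ≤ P.rank :=
  card_le_finrank_range_of_mul_mul_eq_ite (Matrix.toLinAlgEquiv' P)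
    (fun i => Matrix.toLinAlgEquiv' (F i))
    (fun i j => by rw [← map_mul, ← map_mul, hF]; split_ifs <;> simp)
    (fun i => by simpa using hne i)

end OrthogonalFamilies

theorem Matrix.pow_dvd_of_mul_mul_self {R n : Type*} [CommRing R] [Fintype n]
    {E D : Matrix n n R} (hE : E * D * E = E) {p : R} (hp : ∀ a b, p ∣ E a b) :
    ∀ k a b, p ^ k ∣ E a b
  | 0, _, _ => by rw [pow_zero]; exact one_dvd _
  | k + 1, a, b => by
    rw [← hE, Matrix.mul_apply, pow_succ']
    exact Finset.dvd_sum fun y _ => mul_dvd_mul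
      (Finset.dvd_sum fun x _ => (hp a x).mul_right _) (pow_dvd_of_mul_mul_self hE hp k y b)

theorem Matrix.eq_zero_of_mul_mul_self_of_map_zmod_eq_zero {n : Type*} [Fintype n]
    [DecidableEq n] {p : ℕ} (hp : p ≠ 1) {E D : Matrix n n ℤ} (hE : E * D * E = E)
    (hEp : (Int.castRingHom (ZMod p)).mapMatrix E = 0) : E = 0 := by
  have hdvd : ∀ a b, (p : ℤ) ∣ E a b := fun a b =>
    (ZMod.intCast_zmod_eq_zero_iff_dvd _ p).mp (by simpa using congrFun₂ hEp a b)
  ext a b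
  by_contra hab
  obtain ⟨k, hk⟩ := (Int.finiteMultiplicity_iff (a := (p : ℤ))).mpr ⟨by simpa using hp, hab⟩
  exact hk (pow_dvd_of_mul_mul_self hE hdvd (k + 1) a b)

theorem ZMod.intCast_pow_ne_zero_iff {p : ℕ} (hp : p.Prime) (k : ℕ) :
    (((p : ℤ) ^ k : ℤ) : ZMod p) ≠ 0 ↔ (p : ℤ) ^ k = 1 := by
  have := Fact.mk hp
  rcases k with _ | k
  · simp
  · have : (1 : ℤ) < (p : ℤ) ^ (k + 1) := one_lt_pow₀ (by exact_mod_cast hp.one_lt) k.succ_ne_zero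
    simp [this.ne']

theorem stmt2_general {l : ℕ} (p : ℕ) (hp : p.Prime)
    (d : Fin l → ℤ) (hd : ∀ i : Fin l, ∃ k : ℕ, d i = (p : ℤ) ^ k)
    (r : ℕ) (hr : r = (Finset.univ.filter fun i : Fin l => d i = 1).card)
    (s : ℕ) (E : Fin s → Matrix (Fin l) (Fin l) ℤ)
    (hne : ∀ i, E i ≠ 0)
    (hidem : ∀ i, E i * Matrix.diagonal d * E i = E i)
    (horth : ∀ i j, i ≠ j → E i * Matrix.diagonal d * E j = 0) :
    s ≤ r := by
  have := Fact.mk hp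
  set φ := (Int.castRingHom (ZMod p)).mapMatrix (m := Fin l)
  have hF : ∀ i j, φ (E i) * φ (Matrix.diagonal d) * φ (E j) = if i = j then φ (E i) else 0 := by
    intro i j
    rw [← map_mul, ← map_mul]
    split_ifs with h
    · rw [h, hidem]
    · rw [horth i j h, map_zero]
  have hrank := Matrix.card_le_rank_of_mul_mul_eq_ite _ _ hF fun i h =>
    hne i (Matrix.eq_zero_of_mul_mul_self_of_map_zmod_eq_zero hp.ne_one (hidem i) h)
  rw [Fintype.card_fin, RingHom.mapMatrix_apply, Matrix.diagonal_map (map_zero _),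
    Matrix.rank_diagonal, Fintype.card_subtype] at hrank
  rw [hr]
  convert hrank using 2
  ext a
  obtain ⟨k, hk⟩ := hd a
  simp only [hk, Finset.mem_filter, Finset.mem_univ, true_and]
  exact (ZMod.intCast_pow_ne_zero_iff hp k).symm

/-- Let `D = diagonal d` be an integer diagonal matrix whose entries are
powers of a prime `p`, exactly `r` of which equal `1`.  If `E 1, …, E s` are pairwise
orthogonal nonzero idempotents of the ring `Mat_l(ℤ)_D` (multiplication
`A ·_D B = A * D * B`), then `s ≤ r`. -/
theorem stmt2 {l : ℕ} (hl : 0 < l) (p : ℕ) (hp : p.Prime)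
    (d : Fin l → ℤ) (hd : ∀ i : Fin l, ∃ k : ℕ, d i = (p : ℤ) ^ k)
    (r : ℕ) (hr : r = (Finset.univ.filter fun i : Fin l => d i = 1).card)
    (s : ℕ) (E : Fin s → Matrix (Fin l) (Fin l) ℤ)
    (hne : ∀ i, E i ≠ 0)
    (hidem : ∀ i, E i * Matrix.diagonal d * E i = E i)
    (horth : ∀ i j, i ≠ j → E i * Matrix.diagonal d * E j = 0) :
    s ≤ r :=
  stmt2_general p hp d hd r hr s E hne hidem horth
end

section
/- Let l ≥ 1 and m ≥ 1 be integers and C = I_l + m·E_l ∈ Mat_l(ℤ). For i = 1, ..., l−1 define ε_i := E_ii − E_li in the ring Mat_l(ℤ)_C (with multiplication A ·_C B = ACB). Then ε_1, ..., ε_{l−1} are pairwise orthogonal idempotents of Mat_l(ℤ)_C. -/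
/-! Writing `ε_i = E_ii - E_ki` with `k` the last index, the identity
`E_ab · C · E_cd = C_bc E_ad` gives `ε_i C ε_j = (C_ij - C_ik) ε'_{ij}` where
`ε'_{ij} = E_ij - E_kj`. For `C = I + m E` and `i ≠ k` the all-ones part cancels in
`C_ij - C_ik`, leaving `δ_ij`. -/

namespace Matrix

variable {n R : Type*} [DecidableEq n]

theorem single_sub_single_mul_mul_single_sub_single [Fintype n] [Ring R]
    (C : Matrix n n R) (k i j : n) :
    (single i i (1 : R) - single k i 1) * C * (single j j 1 - single k j 1) =
      (C i j - C i k) • (single i j 1 - single k j 1) := by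
  simp only [sub_mul, mul_sub, single_mul_mul_single, one_mul, mul_one, smul_sub, sub_smul,
    smul_single, smul_eq_mul]
  abel

theorem one_add_smul_of_const_apply_sub [Ring R] (m : R) {i k : n} (hik : i ≠ k) (j : n) :
    (1 + m • of fun _ _ => (1 : R)) i j - (1 + m • of fun _ _ => (1 : R)) i k =
      if i = j then 1 else 0 := by
  simp [one_apply, hik]

end Matrix

theorem stmt6_general {l : ℕ} (m : ℤ)
    (C : Matrix (Fin l) (Fin l) ℤ)
    (hC : C = 1 + m • Matrix.of (fun _ _ => (1 : ℤ)))
    (last : Fin l) (hlast : (last : ℕ) = l - 1)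
    (ε : Fin l → Matrix (Fin l) (Fin l) ℤ)
    (hε : ∀ i : Fin l, ε i =
      Matrix.single i i (1 : ℤ) - Matrix.single last i 1) :
    (∀ i : Fin l, (i : ℕ) < l - 1 → ε i * C * ε i = ε i) ∧
    (∀ i j : Fin l, (i : ℕ) < l - 1 → (j : ℕ) < l - 1 → i ≠ j →
      ε i * C * ε j = 0) := by
  have hne : ∀ i : Fin l, (i : ℕ) < l - 1 → i ≠ last := by
    rintro i hi rfl
    omega
  subst hC
  refine ⟨fun i hi => ?_, fun i j hi _ hij => ?_⟩
  · rw [hε, Matrix.single_sub_single_mul_mul_single_sub_single,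
      Matrix.one_add_smul_of_const_apply_sub m (hne i hi), if_pos rfl, one_smul]
  · rw [hε, hε, Matrix.single_sub_single_mul_mul_single_sub_single,
      Matrix.one_add_smul_of_const_apply_sub m (hne i hi), if_neg hij, zero_smul]

/-- Let `l ≥ 1`, `m ≥ 1` and `C = I_l + m·E_l ∈ Mat_l(ℤ)`.  For
`i = 1, …, l−1` set `ε_i := E_ii − E_li`.  Then the `ε_i` are pairwise orthogonal
idempotents of the ring `Mat_l(ℤ)_C` (multiplication `A ·_C B = A * C * B`). -/
theorem stmt6 {l : ℕ} (hl : 1 ≤ l) (m : ℤ) (hm : 1 ≤ m)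
    (C : Matrix (Fin l) (Fin l) ℤ)
    (hC : C = 1 + m • Matrix.of (fun _ _ => (1 : ℤ)))
    (last : Fin l) (hlast : (last : ℕ) = l - 1)
    (ε : Fin l → Matrix (Fin l) (Fin l) ℤ)
    (hε : ∀ i : Fin l, ε i =
      Matrix.single i i (1 : ℤ) - Matrix.single last i 1) :
    (∀ i : Fin l, (i : ℕ) < l - 1 → ε i * C * ε i = ε i) ∧
    (∀ i j : Fin l, (i : ℕ) < l - 1 → (j : ℕ) < l - 1 → i ≠ j →
      ε i * C * ε j = 0) :=
  stmt6_general m C hC last hlast ε hε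
end

section
/- Let p be a prime, D cyclic of order p^n (n ≥ 1), E ≤ Aut(D) a p'-subgroup, and G = D ⋊ E. Let 1 ≤ i ≤ n, α ∈ Aut(D_i), and let Δ(D_i, α, D_i) = {(α(x), x) : x ∈ D_i} ≤ G×G. Then N_{G×G}(Δ(D_i,α,D_i)) = (D×D)·Δ(E), where Δ(E) = {(ρ,ρ) : ρ ∈ E}. -/
/-!
Since `D` is abelian, conjugating `(α x, x)` by `(aρ, bσ)` gives `(ρ (α x), σ x)`. Automorphisms
of a cyclic group are power maps, so they preserve `D_i` and commute with `α`; hence `(aρ, bσ)`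
normalizes `Δ(D_i, α, D_i)` exactly when `ρ` and `σ` agree on `D_i`. Then `τ = σ⁻¹ρ` is a power map
`x ↦ x ^ m` fixing an element of order `p`, so `m ≡ 1 mod p`, hence `m ^ p ^ (n - 1) ≡ 1 mod p ^ n`
and `τ ^ p ^ (n - 1) = 1`; as `τ` has order prime to `p`, `τ = 1`.
-/

open SemidirectProduct

theorem MulAut.pow_apply_of_forall_apply_eq_zpow {G : Type*} [Group G] {τ : MulAut G} {m : ℤ}
    (hτ : ∀ g, τ g = g ^ m) (k : ℕ) (g : G) : (τ ^ k) g = g ^ m ^ k := by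
  induction k generalizing g with
  | zero => simp
  | succ k ih => rw [pow_succ, MulAut.mul_apply, hτ, ih, ← zpow_mul, pow_succ']

section CyclicAut

variable {D : Type*} [Group D] [IsCyclic D] {p n : ℕ}

theorem MulAut.pow_pow_sub_one_eq_one_of_apply_eq_self (hD : Nat.card D = p ^ n) {τ : MulAut D}
    {w : D} (hw : orderOf w = p) (hτw : τ w = w) : τ ^ p ^ (n - 1) = 1 := by
  obtain ⟨m, hm⟩ := MonoidHom.map_cyclic τ.toMonoidHom
  replace hm : ∀ g, τ g = g ^ m := hm
  have hpm : (p : ℤ) ∣ m - 1 := by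
    rw [← hw, orderOf_dvd_iff_zpow_eq_one, zpow_sub_one, ← hm, hτw, mul_inv_cancel]
  obtain ⟨c, hc⟩ : ((p ^ (n - 1 + 1) : ℕ) : ℤ) ∣ m ^ p ^ (n - 1) - 1 := by
    simpa using dvd_sub_pow_of_dvd_sub hpm (n - 1)
  ext g
  have hg : g ^ ((p ^ (n - 1 + 1) : ℕ) : ℤ) = 1 := by
    rw [zpow_natCast, ← orderOf_dvd_iff_pow_eq_one]
    exact (orderOf_dvd_natCard g).trans (hD ▸ pow_dvd_pow p (by omega))
  rw [MulAut.pow_apply_of_forall_apply_eq_zpow hm, MulAut.one_apply, sub_eq_iff_eq_add'.mp hc,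
    zpow_add, zpow_one, zpow_mul, hg, one_zpow, mul_one]

theorem MulAut.eq_one_of_coprime_of_apply_eq_self (hD : Nat.card D = p ^ n) {τ : MulAut D}
    (hτ : (orderOf τ).Coprime p) {w : D} (hw : orderOf w = p) (hτw : τ w = w) : τ = 1 :=
  orderOf_eq_one_iff.mp <| (hτ.pow_right (n - 1)).eq_one_of_dvd <|
    orderOf_dvd_of_pow_eq_one (MulAut.pow_pow_sub_one_eq_one_of_apply_eq_self hD hw hτw)

end CyclicAut

theorem MonoidHom.apply_coe_comm_of_isCyclic {G : Type*} [Group G] {H : Subgroup G} [IsCyclic H]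
    (f : G →* G) (α : H →* H) {u v : H} (h : f u = v) : f (α u) = α v := by
  obtain ⟨m, hm⟩ := MonoidHom.map_cyclic α
  rw [hm, hm, Subgroup.coe_zpow, Subgroup.coe_zpow, map_zpow, h]

theorem MonoidHom.map_mem_of_isCyclic {G : Type*} [Group G] [IsCyclic G] (f : G →* G)
    {H : Subgroup G} {u : G} (hu : u ∈ H) : f u ∈ H := by
  obtain ⟨m, hm⟩ := MonoidHom.map_cyclic f
  exact hm u ▸ H.zpow_mem hu m

namespace SemidirectProduct

variable {N G : Type*} [Group N] [Group G] {φ : G →* MulAut N}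

theorem mul_inl_mul_inv [IsMulCommutative N] (g : N ⋊[φ] G) (u : N) :
    g * inl u * g⁻¹ = inl (φ g.right u) := by
  ext <;> simp [mul_comm']

theorem prod_mul_inl_mul_inv [IsMulCommutative N] (z : (N ⋊[φ] G) × (N ⋊[φ] G)) (a b : N) :
    z * (inl a, inl b) * z⁻¹ = (inl (φ z.1.right a), inl (φ z.2.right b)) :=
  Prod.ext (mul_inl_mul_inv z.1 a) (mul_inl_mul_inv z.2 b)

variable (φ) in
def twistedDiagonal (H : Subgroup N) (α : H ≃* H) : Set ((N ⋊[φ] G) × (N ⋊[φ] G)) :=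
  {z | ∃ x : H, z = (inl (α x : N), inl (x : N))}

theorem right_eq_right_iff_exists (z : (N ⋊[φ] G) × (N ⋊[φ] G)) :
    z.1.right = z.2.right ↔ ∃ (x y : N) (ρ : G), z = (inl x * inr ρ, inl y * inr ρ) := by
  constructor
  · intro h
    refine ⟨z.1.left, z.2.left, z.1.right, Prod.ext ?_ ?_⟩
    · exact (inl_left_mul_inr_right z.1).symm
    · rw [h]; exact (inl_left_mul_inr_right z.2).symm
  · rintro ⟨x, y, ρ, rfl⟩
    simp

variable [IsCyclic N] {H : Subgroup N} {α : H ≃* H}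

theorem mem_normalizer_twistedDiagonal_of_right_eq {z : (N ⋊[φ] G) × (N ⋊[φ] G)}
    (hz : z.1.right = z.2.right) : z ∈ Subgroup.normalizer (twistedDiagonal φ H α) := by
  let K := ((rightHom (φ := φ)).comp (MonoidHom.fst (N ⋊[φ] G) (N ⋊[φ] G))).eqLocus
    ((rightHom (φ := φ)).comp (MonoidHom.snd (N ⋊[φ] G) (N ⋊[φ] G)))
  refine (Subgroup.le_set_normalizer_iff (H := K)).mpr ?_ hz
  rintro y (hy : y.1.right = y.2.right) _ ⟨x, rfl⟩
  refine ⟨⟨φ y.2.right x, (φ y.2.right).toMonoidHom.map_mem_of_isCyclic x.2⟩, ?_⟩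
  rw [prod_mul_inl_mul_inv, hy]
  congr 2
  exact (φ y.2.right).toMonoidHom.apply_coe_comm_of_isCyclic α.toMonoidHom rfl

theorem right_apply_eq_of_mem_normalizer_twistedDiagonal {z : (N ⋊[φ] G) × (N ⋊[φ] G)}
    (hz : z ∈ Subgroup.normalizer (twistedDiagonal φ H α)) (v : H) :
    φ z.1.right v = φ z.2.right v := by
  obtain ⟨x', hx'⟩ := (hz _).mp ⟨α.symm v, rfl⟩
  rw [prod_mul_inl_mul_inv, Prod.mk.injEq, inl_inj, inl_inj, α.apply_symm_apply] at hx'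
  rw [hx'.1, ← α.apply_symm_apply v]
  exact ((φ z.2.right).toMonoidHom.apply_coe_comm_of_isCyclic α.toMonoidHom hx'.2).symm

end SemidirectProduct

theorem stmt12_general (p n : ℕ) (hp : p.Prime)
    (D : Type*) [Group D] [IsCyclic D] [Fintype D] (hD : Fintype.card D = p ^ n)
    (E : Subgroup (MulAut D)) (hE : Nat.Coprime (Nat.card E) p)
    (i : ℕ) (hi1 : 1 ≤ i)
    (Di : Subgroup D) (hDi : Nat.card Di = p ^ i) (α : Di ≃* Di)
    (S : Subgroup ((D ⋊[E.subtype] E) × (D ⋊[E.subtype] E)))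
    (hS : (S : Set ((D ⋊[E.subtype] E) × (D ⋊[E.subtype] E))) =
      {z | ∃ x : Di, z = (SemidirectProduct.inl ((α x : Di) : D),
                          SemidirectProduct.inl ((x : Di) : D))}) :
    (Subgroup.normalizer (S : Set ((D ⋊[E.subtype] E) × (D ⋊[E.subtype] E))) : Set ((D ⋊[E.subtype] E) × (D ⋊[E.subtype] E))) =
      {z | ∃ (x y : D) (ρ : E),
        z = (SemidirectProduct.inl x * SemidirectProduct.inr ρ,
             SemidirectProduct.inl y * SemidirectProduct.inr ρ)} := by
  have : Fact p.Prime := ⟨hp⟩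
  obtain ⟨w, hw⟩ := exists_prime_orderOf_dvd_card' (G := Di) p (hDi ▸ dvd_pow_self p (by omega))
  have hS' : (S : Set _) = twistedDiagonal E.subtype Di α := hS
  ext z
  rw [SetLike.mem_coe, hS', Set.mem_ofPred_eq, ← right_eq_right_iff_exists]
  refine ⟨fun hz ↦ ?_, mem_normalizer_twistedDiagonal_of_right_eq⟩
  suffices h : ((z.2.right⁻¹ * z.1.right : E) : MulAut D) = 1 by
    rw [OneMemClass.coe_eq_one, inv_mul_eq_one] at h
    exact h.symm
  refine MulAut.eq_one_of_coprime_of_apply_eq_self (Nat.card_eq_fintype_card.trans hD) ?_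
    (w := w) (by rwa [Subgroup.orderOf_coe]) ?_
  · rw [Subgroup.orderOf_coe]
    exact hE.coprime_dvd_left (orderOf_dvd_natCard _)
  · have h : (z.1.right : MulAut D) w = (z.2.right : MulAut D) w :=
      right_apply_eq_of_mem_normalizer_twistedDiagonal hz w
    rw [Subgroup.coe_mul, Subgroup.coe_inv, MulAut.mul_apply, h, MulAut.inv_apply_self]

/-- Let `p` be a prime, `D` cyclic of order `p^n`, `E ≤ Aut(D)` a
`p'`-subgroup and `G = D ⋊ E`.  For `1 ≤ i ≤ n`, `D_i ≤ D` the subgroup of order `p^i`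
and `α ∈ Aut(D_i)`, the normalizer of `Δ(D_i,α,D_i) = {(α x, x) : x ∈ D_i}` in `G × G`
is `(D × D)·Δ(E)`. -/
theorem stmt12 (p n : ℕ) (hp : p.Prime) (hn : 1 ≤ n)
    (D : Type*) [Group D] [IsCyclic D] [Fintype D] (hD : Fintype.card D = p ^ n)
    (E : Subgroup (MulAut D)) (hE : Nat.Coprime (Nat.card E) p)
    (i : ℕ) (hi1 : 1 ≤ i) (hin : i ≤ n)
    (Di : Subgroup D) (hDi : Nat.card Di = p ^ i) (α : Di ≃* Di)
    (S : Subgroup ((D ⋊[E.subtype] E) × (D ⋊[E.subtype] E)))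
    (hS : (S : Set ((D ⋊[E.subtype] E) × (D ⋊[E.subtype] E))) =
      {z | ∃ x : Di, z = (SemidirectProduct.inl ((α x : Di) : D),
                          SemidirectProduct.inl ((x : Di) : D))}) :
    (Subgroup.normalizer (S : Set ((D ⋊[E.subtype] E) × (D ⋊[E.subtype] E))) : Set ((D ⋊[E.subtype] E) × (D ⋊[E.subtype] E))) =
      {z | ∃ (x y : D) (ρ : E),
        z = (SemidirectProduct.inl x * SemidirectProduct.inr ρ,
             SemidirectProduct.inl y * SemidirectProduct.inr ρ)} :=
  stmt12_general p n hp D hD E hE i hi1 Di hDi α S hS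
end

section
/- Let p be a prime, D cyclic of order p^n, E ≤ Aut(D) a p'-subgroup, G = D ⋊ E, and D_i, D_j the subgroups of D of orders p^i, p^j respectively, with (i,j) ≠ (0,0). Set k = min{i,j}, l = max{i,j}. If g ∈ G with g ∉ D_l·E, then D_iE ∩ ^g(D_jE) = D_k. Moreover |D_iE·g·D_jE| = p^l·|E|^2 and the number of nontrivial (D_iE, D_jE)-double cosets in G is (p^{n−l} − 1)/|E|. -/
/-!
Every automorphism of the cyclic group `D` is a power map `y ↦ y ^ u`. For a `p'`-automorphism,
either `u ≡ 1 mod p`, and then lifting the exponent forces `u ≡ 1 mod p ^ n`, i.e. the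
automorphism is trivial, or `u - 1` is prime to `p`, and then `y ^ (u - 1) ∈ L` forces `y ∈ L`
for every subgroup `L`. Hence a nontrivial element of `E` fixes no nontrivial coset of any
subgroup of `D`.

Subgroups of `D` are determined by their orders, so `D_k = D_i ⊓ D_j` and `D_l = D_i ⊔ D_j`.
In `D ⋊ E` the double coset `D_iE · g · D_jE` consists of the pairs whose `D`-component lies in
`e(g_D) D_l` for some `e ∈ E`, with free `E`-component. For `g ∉ D_lE` these `|E|` cosets of `D_l`
are pairwise distinct, which gives both the intersection and the size `p^l |E|²`; the double
coset of `1` is `D_lE`, of size `p^l |E|`, and counting `|G| = p^n |E|` over double cosets gives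
their number.
-/

theorem Subgroup.mem_of_zpow_mem_of_isCoprime {G : Type*} [Group G] (L : Subgroup G) {g : G}
    {m : ℤ} (hm : IsCoprime m (orderOf g)) (h : g ^ m ∈ L) : g ∈ L := by
  obtain ⟨a, b, hab⟩ := hm
  have hg : g = (g ^ m) ^ a := calc
    g = g ^ (a * m + b * orderOf g) := by rw [hab, zpow_one]
    _ = (g ^ m) ^ a := by
      rw [zpow_add, mul_comm b, zpow_mul g (orderOf g : ℤ), zpow_natCast, pow_orderOf_eq_one,
        one_zpow, mul_one, mul_comm, zpow_mul]
  rw [hg]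
  exact L.zpow_mem h a

theorem Subgroup.apply_mem_sup {G : Type*} [Group G] {f : MulAut G} {A B : Subgroup G}
    (hA : ∀ n ∈ A, f n ∈ A) (hB : ∀ n ∈ B, f n ∈ B) {n : G} (hn : n ∈ A ⊔ B) : f n ∈ A ⊔ B := by
  have : (A ⊔ B).map f.toMonoidHom ≤ A ⊔ B := by
    rw [Subgroup.map_sup]
    exact sup_le_sup (Subgroup.map_le_iff_le_comap.2 hA) (Subgroup.map_le_iff_le_comap.2 hB)
  exact this ⟨n, hn, rfl⟩

theorem MulAut.pow_apply_eq_zpow {G : Type*} [Group G] {f : MulAut G} {u : ℤ}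
    (hu : ∀ g, f g = g ^ u) (m : ℕ) (g : G) : (f ^ m) g = g ^ u ^ m := by
  induction m with
  | zero => simp
  | succ m ih => rw [pow_succ', MulAut.mul_apply, ih, hu, ← zpow_mul, ← pow_succ]

theorem pow_dvd_sub_one_of_pow_dvd_pow_sub_one {R : Type*} [CommRing R] [IsDomain R] {p u : R}
    (hp : Prime p) (hu : p ∣ u - 1) {t : ℕ} (ht : ¬p ∣ (t : R)) {n : ℕ}
    (h : p ^ n ∣ u ^ t - 1) : p ^ n ∣ u - 1 := by
  have hpu : ¬p ∣ u := fun hpu => hp.not_dvd_one (by simpa using dvd_sub hpu hu)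
  rw [pow_dvd_iff_le_emultiplicity, ← emultiplicity_pow_sub_pow_of_prime hp (y := 1) hu hpu ht,
    one_pow, ← pow_dvd_iff_le_emultiplicity]
  exact h

namespace IsCyclic

section Group

variable {D : Type*} [Group D] [IsCyclic D]

theorem mulAut_apply_mem (H : Subgroup D) (f : MulAut D) (g : D) (hg : g ∈ H) : f g ∈ H := by
  obtain ⟨m, hm⟩ := f.toMonoidHom.map_cyclic
  exact hm g ▸ H.zpow_mem hg m

theorem eq_one_or_mem_of_mul_inv_mem {p n : ℕ} (hp : p.Prime) (hD : Nat.card D = p ^ n)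
    {f : MulAut D} (hf : (orderOf f).Coprime p) (L : Subgroup D) {d : D} (hd : f d * d⁻¹ ∈ L) :
    f = 1 ∨ d ∈ L := by
  obtain ⟨u, hu⟩ := f.toMonoidHom.map_cyclic
  replace hu : ∀ y, f y = y ^ u := hu
  have hp' : Prime (p : ℤ) := Nat.prime_iff_prime_int.mp hp
  have hord (y : D) : (orderOf y : ℤ) ∣ (p : ℤ) ^ n := by
    exact_mod_cast hD ▸ orderOf_dvd_natCard y
  by_cases hpu : (p : ℤ) ∣ u - 1
  · obtain ⟨x, hx⟩ := IsCyclic.exists_ofOrder_eq_natCard (α := D)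
    have hxu : (p : ℤ) ^ n ∣ u ^ orderOf f - 1 := by
      rw [show (p : ℤ) ^ n = orderOf x by rw [hx, hD]; push_cast; rfl,
        orderOf_dvd_iff_zpow_eq_one, zpow_sub_one, ← MulAut.pow_apply_eq_zpow hu,
        pow_orderOf_eq_one, MulAut.one_apply, mul_inv_cancel]
    have hf' : ¬(p : ℤ) ∣ (orderOf f : ℤ) :=
      Int.natCast_dvd_natCast.not.mpr ((hp.coprime_iff_not_dvd).mp hf.symm)
    have hu1 := pow_dvd_sub_one_of_pow_dvd_pow_sub_one hp' hpu hf' hxu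
    left
    ext y
    rw [MulAut.one_apply, hu y, ← sub_add_cancel u 1, zpow_add,
      orderOf_dvd_iff_zpow_eq_one.mp ((hord y).trans hu1), one_mul, zpow_one]
  · right
    refine L.mem_of_zpow_mem_of_isCoprime ?_ (by rwa [zpow_sub_one, ← hu])
    exact ((hp'.coprime_iff_not_dvd.mpr hpu).pow_left.symm).of_isCoprime_of_dvd_right (hord d)

end Group

section CommGroup

variable {G : Type*} [CommGroup G] [IsCyclic G] [Finite G]

theorem mem_subgroup_iff_pow_card_eq_one (H : Subgroup G) {g : G} :
    g ∈ H ↔ g ^ Nat.card H = 1 := by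
  have hH : H = (powMonoidHom (Nat.card H) : G →* G).ker := by
    refine Subgroup.eq_of_le_of_card_ge (fun g hg => ?_) ?_
    · rw [MonoidHom.mem_ker, powMonoidHom_apply, ← H.coe_mk g hg, ← Subgroup.coe_pow,
        pow_card_eq_one', H.coe_one]
    · rw [card_powMonoidHom_ker, Nat.gcd_eq_right (Subgroup.card_subgroup_dvd_card H)]
  conv_lhs => rw [hH]
  rfl

theorem subgroup_le_of_card_dvd {H K : Subgroup G} (h : Nat.card H ∣ Nat.card K) : H ≤ K := by
  intro g hg
  obtain ⟨c, hc⟩ := h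
  rw [mem_subgroup_iff_pow_card_eq_one] at hg ⊢
  rw [hc, pow_mul, hg, one_pow]

theorem subgroup_eq_of_card_eq {H K : Subgroup G} (h : Nat.card H = Nat.card K) : H = K :=
  le_antisymm (subgroup_le_of_card_dvd h.dvd) (subgroup_le_of_card_dvd h.symm.dvd)

variable {p i j : ℕ} {A B L : Subgroup G}

theorem eq_sup_of_card_eq_pow_max (hA : Nat.card A = p ^ i) (hB : Nat.card B = p ^ j)
    (hL : Nat.card L = p ^ max i j) : L = A ⊔ B := by
  rcases le_total i j with h | h
  · rw [sup_eq_right.2 (subgroup_le_of_card_dvd (by rw [hA, hB]; exact pow_dvd_pow p h))]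
    exact subgroup_eq_of_card_eq (by rw [hL, hB, max_eq_right h])
  · rw [sup_eq_left.2 (subgroup_le_of_card_dvd (by rw [hA, hB]; exact pow_dvd_pow p h))]
    exact subgroup_eq_of_card_eq (by rw [hL, hA, max_eq_left h])

theorem eq_inf_of_card_eq_pow_min (hA : Nat.card A = p ^ i) (hB : Nat.card B = p ^ j)
    (hL : Nat.card L = p ^ min i j) : L = A ⊓ B := by
  rcases le_total i j with h | h
  · rw [inf_eq_left.2 (subgroup_le_of_card_dvd (by rw [hA, hB]; exact pow_dvd_pow p h))]
    exact subgroup_eq_of_card_eq (by rw [hL, hA, min_eq_left h])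
  · rw [inf_eq_right.2 (subgroup_le_of_card_dvd (by rw [hA, hB]; exact pow_dvd_pow p h))]
    exact subgroup_eq_of_card_eq (by rw [hL, hB, min_eq_right h])

end CommGroup

end IsCyclic

open DoubleCoset in
theorem DoubleCoset.card_eq_add_mul_of_card_doubleCoset {G : Type*} [Group G] [Finite G]
    {H K : Subgroup G} {a : G} {c : ℕ}
    (hc : ∀ b ∉ doubleCoset a H K, Nat.card (doubleCoset b H K) = c) :
    Nat.card G = Nat.card (doubleCoset a H K) + (Nat.card (Quotient (H : Set G) K) - 1) * c := by
  classical
  have : Finite (Quotient (H : Set G) K) := Quotient.finite _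
  have : Fintype (Quotient (H : Set G) K) := Fintype.ofFinite _
  have hfiber (q : Quotient (H : Set G) K) :
      Nat.card {x // mk H K x = q} = Nat.card (doubleCoset q.out H K) :=
    Nat.card_congr (Equiv.subtypeEquivRight fun x => (mem_quotToDoubleCoset_iff q x).symm)
  have hout (q : Quotient (H : Set G) K) (hq : q ≠ mk H K a) : q.out ∉ doubleCoset a H K :=
    fun h => hq <| by rw [← out_eq' H K q]; exact mk_eq_of_doubleCoset_eq (doubleCoset_eq_of_mem h)
  have ha : doubleCoset (mk H K a).out H K = doubleCoset a H K :=
    (doubleCoset_eq_of_mem ((mem_quotToDoubleCoset_iff _ a).2 rfl)).symm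
  calc Nat.card G = ∑ q, Nat.card {x // mk H K x = q} := by
        rw [← Nat.card_sigma, Nat.card_congr (Equiv.sigmaFiberEquiv _)]
    _ = ∑ q, Nat.card (doubleCoset q.out H K) := Finset.sum_congr rfl fun q _ => hfiber q
    _ = Nat.card (doubleCoset a H K) + (Nat.card (Quotient (H : Set G) K) - 1) * c := by
      rw [← Finset.add_sum_erase _ _ (Finset.mem_univ (mk H K a)), ha,
        Finset.sum_congr rfl fun q hq => hc _ (hout q (Finset.ne_of_mem_erase hq)),
        Finset.sum_const, Finset.card_erase_of_mem (Finset.mem_univ _), Finset.card_univ,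
        ← Nat.card_eq_fintype_card, smul_eq_mul]

namespace SemidirectProduct

open DoubleCoset Subgroup

variable {N K : Type*}

section Group

variable [Group N] [Group K] {φ : K →* MulAut N}

/-- The subgroup `H ⋊ K`; the paper's `D_iE` is `leftPreimage D_i _`. -/
def leftPreimage (H : Subgroup N) (hH : ∀ k, ∀ n ∈ H, φ k n ∈ H) : Subgroup (N ⋊[φ] K) where
  carrier := {x | x.left ∈ H}
  one_mem' := H.one_mem
  mul_mem' ha hb := H.mul_mem ha (hH _ _ hb)
  inv_mem' ha := hH _ _ (H.inv_mem ha)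

variable {H : Subgroup N}

theorem map_inl_sup_range_inr (hH : ∀ k, ∀ n ∈ H, φ k n ∈ H) :
    H.map inl ⊔ (inr : K →* N ⋊[φ] K).range = leftPreimage H hH := by
  refine le_antisymm (sup_le ?_ ?_) fun x hx => ?_
  · rintro _ ⟨n, hn, rfl⟩
    exact hn
  · rintro _ ⟨k, rfl⟩
    exact H.one_mem
  · rw [← inl_left_mul_inr_right x]
    exact mul_mem_sup ⟨x.left, hx, rfl⟩ ⟨x.right, rfl⟩

variable {hH : ∀ k, ∀ n ∈ H, φ k n ∈ H}

@[simp]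
theorem mem_leftPreimage {x : N ⋊[φ] K} : x ∈ leftPreimage H hH ↔ x.left ∈ H := Iff.rfl

theorem card_leftPreimage : Nat.card (leftPreimage H hH) = Nat.card H * Nat.card K := by
  rw [← Nat.card_prod]
  exact Nat.card_congr <| (equivProd.subtypeEquiv fun _ => Iff.rfl).trans
    Equiv.prodSubtypeFstEquivSubtypeProd

end Group

section CommGroup

variable [CommGroup N] [Group K] {φ : K →* MulAut N} {A B : Subgroup N}
  {hA : ∀ k, ∀ n ∈ A, φ k n ∈ A} {hB : ∀ k, ∀ n ∈ B, φ k n ∈ B}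

theorem mem_doubleCoset_leftPreimage {g x : N ⋊[φ] K} :
    x ∈ doubleCoset g (leftPreimage A hA) (leftPreimage B hB) ↔
      ∃ k, (φ k g.left)⁻¹ * x.left ∈ A ⊔ B := by
  rw [mem_doubleCoset]
  constructor
  · rintro ⟨h, hh, h', hh', rfl⟩
    refine ⟨h.right, ?_⟩
    have : (φ h.right g.left)⁻¹ * (h * g * h').left = h.left * φ (h.right * g.right) h'.left := by
      simp only [mul_left, mul_right]
      rw [mul_comm h.left, mul_assoc, inv_mul_cancel_left]
    rw [this]
    exact mul_mem_sup hh (hB _ _ hh')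
  · rintro ⟨k, hk⟩
    obtain ⟨a, ha, b, hb, hab⟩ := mem_sup.1 hk
    refine ⟨⟨a, k⟩, ha, (⟨a, k⟩ * g)⁻¹ * x, ?_, by group⟩
    have hx : x.left = φ k g.left * (a * b) := by rw [hab, mul_inv_cancel_left]
    show ((⟨a, k⟩ * g)⁻¹ * x).left ∈ B
    rw [mul_left, inv_left, inv_right, hx, ← map_mul]
    simp only [mul_left, mul_right]
    rw [mul_comm a, ← mul_assoc _ a b, inv_mul_cancel_left]
    exact hB _ _ hb

theorem doubleCoset_leftPreimage_of_left_mem {g : N ⋊[φ] K} (hg : g.left ∈ A ⊔ B) :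
    doubleCoset g (leftPreimage A hA) (leftPreimage B hB) = {x | x.left ∈ A ⊔ B} := by
  ext x
  rw [mem_doubleCoset_leftPreimage, Set.mem_ofPred_eq]
  refine ⟨fun ⟨k, hk⟩ => ?_, fun hx => ⟨1, ?_⟩⟩
  · rw [← mul_inv_cancel_left (φ k g.left) x.left]
    exact mul_mem (apply_mem_sup (hA k) (hB k) hg) hk
  · rw [map_one, MulAut.one_apply]
    exact mul_mem (inv_mem hg) hx

theorem card_doubleCoset_leftPreimage {g : N ⋊[φ] K}
    (hg : ∀ k, φ k g.left * g.left⁻¹ ∈ A ⊔ B → k = 1) :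
    Nat.card (doubleCoset g (leftPreimage A hA) (leftPreimage B hB)) =
      Nat.card (A ⊔ B : Subgroup N) * Nat.card K ^ 2 := by
  let F : K × (A ⊔ B : Subgroup N) × K → doubleCoset g (leftPreimage A hA) (leftPreimage B hB) :=
    fun y => ⟨⟨φ y.1 g.left * y.2.1, y.2.2⟩,
      mem_doubleCoset_leftPreimage.2 ⟨y.1, by rw [inv_mul_cancel_left]; exact y.2.1.2⟩⟩
  have hF : Function.Bijective F := by
    constructor
    · rintro ⟨k₁, z₁, k₁'⟩ ⟨k₂, z₂, k₂'⟩ h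
      have hl : φ k₁ g.left * z₁ = φ k₂ g.left * z₂ := congrArg (·.1.left) h
      obtain rfl : k₁' = k₂' := congrArg (·.1.right) h
      have hk : φ (k₂⁻¹ * k₁) g.left * g.left⁻¹ = φ k₂⁻¹ (z₂ * (z₁ : N)⁻¹) := by
        rw [map_mul, MulAut.mul_apply, eq_mul_inv_of_mul_eq hl, map_inv, map_mul, map_mul,
          MulAut.inv_apply_self, map_mul, mul_assoc g.left, mul_comm g.left, mul_inv_cancel_right]
      obtain rfl : k₂ = k₁ := inv_mul_eq_one.1 <| hg _ <| hk ▸ apply_mem_sup (hA _) (hB _)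
        (mul_mem z₂.2 (inv_mem z₁.2))
      obtain rfl : z₁ = z₂ := Subtype.ext (mul_left_cancel hl)
      rfl
    · rintro ⟨x, hx⟩
      obtain ⟨k, hk⟩ := mem_doubleCoset_leftPreimage.1 hx
      exact ⟨(k, ⟨_, hk⟩, x.right), Subtype.ext (by simp [F])⟩
  rw [← Nat.card_eq_of_bijective F hF, Nat.card_prod, Nat.card_prod]
  ring

theorem inf_map_conj_leftPreimage {g : N ⋊[φ] K}
    (hg : ∀ k, φ k g.left * g.left⁻¹ ∈ A ⊔ B → k = 1) :
    leftPreimage A hA ⊓ (leftPreimage B hB).map (MulAut.conj g).toMonoidHom = (A ⊓ B).map inl := by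
  ext x
  have hconj : (g⁻¹ * x * g).left = φ g.right⁻¹ (x.left * (φ x.right g.left * g.left⁻¹)) := by
    simp only [mul_left, inv_left, mul_right, inv_right, map_mul, MulAut.mul_apply]
    rw [mul_assoc, mul_comm (φ g.right⁻¹ g.left⁻¹), mul_assoc]
  rw [mem_inf, mem_map_equiv, MulAut.conj_symm_apply, mem_leftPreimage, mem_leftPreimage, hconj]
  constructor
  · rintro ⟨hxA, hxB⟩
    have hxB' : x.left * (φ x.right g.left * g.left⁻¹) ∈ B := by
      simpa using hB g.right _ hxB
    have hr : x.right = 1 := hg _ (by simpa using mul_mem_sup (inv_mem hxA) hxB')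
    rw [hr, map_one, MulAut.one_apply, mul_inv_cancel, mul_one] at hxB'
    exact ⟨x.left, ⟨hxA, hxB'⟩, by ext <;> simp [hr]⟩
  · rintro ⟨n, ⟨hnA, hnB⟩, rfl⟩
    simp only [left_inl, right_inl, map_one, MulAut.one_apply, mul_inv_cancel, mul_one]
    exact ⟨hnA, hB _ _ hnB⟩

end CommGroup

end SemidirectProduct

open SemidirectProduct in
theorem stmt13_general (p n : ℕ) (hp : p.Prime)
    (D : Type*) [Group D] [IsCyclic D] [Fintype D] (hD : Fintype.card D = p ^ n)
    (E : Subgroup (MulAut D)) (hE : Nat.Coprime (Nat.card E) p)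
    (i j : ℕ) (hin : i ≤ n) (hjn : j ≤ n)
    (Di Dj Dk Dl : Subgroup D)
    (hDi : Nat.card Di = p ^ i) (hDj : Nat.card Dj = p ^ j)
    (hDk : Nat.card Dk = p ^ min i j) (hDl : Nat.card Dl = p ^ max i j)
    (DiE DjE DlE : Subgroup (D ⋊[E.subtype] E))
    (hDiE : DiE = Di.map SemidirectProduct.inl ⊔
      (SemidirectProduct.inr : E →* D ⋊[E.subtype] E).range)
    (hDjE : DjE = Dj.map SemidirectProduct.inl ⊔
      (SemidirectProduct.inr : E →* D ⋊[E.subtype] E).range)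
    (hDlE : DlE = Dl.map SemidirectProduct.inl ⊔
      (SemidirectProduct.inr : E →* D ⋊[E.subtype] E).range) :
    (∀ g : D ⋊[E.subtype] E, g ∉ DlE →
      (DiE ⊓ DjE.map (MulAut.conj g).toMonoidHom = Dk.map SemidirectProduct.inl) ∧
      Nat.card (DoubleCoset.doubleCoset g (DiE : Set (D ⋊[E.subtype] E)) (DjE : Set (D ⋊[E.subtype] E)))
        = p ^ max i j * (Nat.card E) ^ 2) ∧
    Nat.card (DoubleCoset.Quotient (DiE : Set (D ⋊[E.subtype] E)) (DjE : Set (D ⋊[E.subtype] E)))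
        - 1 = (p ^ (n - max i j) - 1) / Nat.card E := by
  let : CommGroup D := IsCyclic.commGroup
  have hD' : Nat.card D = p ^ n := Nat.card_eq_fintype_card.trans hD
  have hinv (H : Subgroup D) : ∀ e : E, ∀ y ∈ H, E.subtype e y ∈ H :=
    fun e => IsCyclic.mulAut_apply_mem H e
  obtain rfl := IsCyclic.eq_sup_of_card_eq_pow_max hDi hDj hDl
  obtain rfl := IsCyclic.eq_inf_of_card_eq_pow_min hDi hDj hDk
  rw [map_inl_sup_range_inr (hinv _)] at hDiE hDjE hDlE
  subst hDiE hDjE hDlE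
  have hfree (g : D ⋊[E.subtype] E) (hg : g.left ∉ Di ⊔ Dj) (e : E)
      (he : E.subtype e g.left * g.left⁻¹ ∈ Di ⊔ Dj) : e = 1 :=
    Subtype.ext <| (IsCyclic.eq_one_or_mem_of_mul_inv_mem hp hD'
      (Subgroup.orderOf_coe e ▸ hE.coprime_dvd_left (orderOf_dvd_natCard e)) _ he).resolve_right hg
  refine ⟨fun g hg => ⟨inf_map_conj_leftPreimage (hfree g hg),
    by rw [card_doubleCoset_leftPreimage (hfree g hg), hDl]⟩, ?_⟩
  have : Finite (D ⋊[E.subtype] E) := Finite.of_equiv _ equivProd.symm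
  have hcount := DoubleCoset.card_eq_add_mul_of_card_doubleCoset (H := leftPreimage Di (hinv Di))
    (K := leftPreimage Dj (hinv Dj)) (a := 1) (c := p ^ max i j * Nat.card E ^ 2) fun b hb => by
      rw [doubleCoset_leftPreimage_of_left_mem (one_mem _)] at hb
      rw [card_doubleCoset_leftPreimage (hfree b hb), hDl]
  rw [doubleCoset_leftPreimage_of_left_mem (one_mem _), SemidirectProduct.card, hD',
    show Nat.card {x : D ⋊[E.subtype] E | x.left ∈ Di ⊔ Dj} = _ from
      card_leftPreimage (hH := hinv _), hDl, ← Nat.sub_add_cancel (max_le hin hjn), pow_add]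
    at hcount
  generalize Nat.card (DoubleCoset.Quotient (leftPreimage Di (hinv Di) : Set (D ⋊[E.subtype] E))
    (leftPreimage Dj (hinv Dj))) = N at hcount ⊢
  have hE0 : 0 < Nat.card E := Nat.card_pos
  have hN : p ^ (n - max i j) = 1 + (N - 1) * Nat.card E :=
    Nat.eq_of_mul_eq_mul_right (Nat.mul_pos (pow_pos hp.pos (max i j)) hE0) <| by
      linear_combination hcount
  rw [hN, Nat.add_sub_cancel_left, Nat.mul_div_cancel _ hE0]

/-- Let `p` be prime, `D` cyclic of order `p^n`, `E ≤ Aut(D)` a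
`p'`-subgroup, `G = D ⋊ E`, and `D_i, D_j ≤ D` of orders `p^i, p^j` with
`(i,j) ≠ (0,0)`; set `k = min i j`, `l = max i j`.  If `g ∉ D_l·E` then
`D_iE ∩ ^g(D_jE) = D_k`; moreover `|D_iE·g·D_jE| = p^l·|E|²` and the number of
nontrivial `(D_iE, D_jE)`-double cosets equals `(p^{n−l} − 1)/|E|`. -/
theorem stmt13 (p n : ℕ) (hp : p.Prime)
    (D : Type*) [Group D] [IsCyclic D] [Fintype D] (hD : Fintype.card D = p ^ n)
    (E : Subgroup (MulAut D)) (hE : Nat.Coprime (Nat.card E) p)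
    (i j : ℕ) (hin : i ≤ n) (hjn : j ≤ n) (hij : ¬(i = 0 ∧ j = 0))
    (Di Dj Dk Dl : Subgroup D)
    (hDi : Nat.card Di = p ^ i) (hDj : Nat.card Dj = p ^ j)
    (hDk : Nat.card Dk = p ^ min i j) (hDl : Nat.card Dl = p ^ max i j)
    (DiE DjE DlE : Subgroup (D ⋊[E.subtype] E))
    (hDiE : DiE = Di.map SemidirectProduct.inl ⊔
      (SemidirectProduct.inr : E →* D ⋊[E.subtype] E).range)
    (hDjE : DjE = Dj.map SemidirectProduct.inl ⊔
      (SemidirectProduct.inr : E →* D ⋊[E.subtype] E).range)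
    (hDlE : DlE = Dl.map SemidirectProduct.inl ⊔
      (SemidirectProduct.inr : E →* D ⋊[E.subtype] E).range) :
    (∀ g : D ⋊[E.subtype] E, g ∉ DlE →
      (DiE ⊓ DjE.map (MulAut.conj g).toMonoidHom = Dk.map SemidirectProduct.inl) ∧
      Nat.card (DoubleCoset.doubleCoset g (DiE : Set (D ⋊[E.subtype] E)) (DjE : Set (D ⋊[E.subtype] E)))
        = p ^ max i j * (Nat.card E) ^ 2) ∧
    Nat.card (DoubleCoset.Quotient (DiE : Set (D ⋊[E.subtype] E)) (DjE : Set (D ⋊[E.subtype] E)))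
        - 1 = (p ^ (n - max i j) - 1) / Nat.card E :=
  stmt13_general p n hp D hD E hE i j hin hjn Di Dj Dk Dl hDi hDj hDk hDl DiE DjE DlE hDiE hDjE hDlE
end

section
/- Let R be a unital Noetherian ring, n ≥ 0, and I_0 ⊆ I_1 ⊆ ... ⊆ I_n ⊊ R a chain of two-sided ideals such that the only idempotents of R/I_n are 0 and 1, and for each k = 1, ..., n the only idempotent of the (nonunital) ring I_k/I_{k−1} is 0. Then for any two nonzero orthogonal idempotents e, e' of R, one has e ∈ I_0 or e' ∈ I_0. In particular, the only idempotents of R/I_0 are 0 and 1. -/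
/-- Let `R` be a unital Noetherian ring and
`I 0 ⊆ I 1 ⊆ … ⊆ I n ⊊ R` a chain of two-sided ideals such that the only idempotents of
`R / I n` are `0` and `1` (i.e. `x² − x ∈ I n → x ∈ I n ∨ 1 − x ∈ I n`) and the only
idempotent of `I k / I (k−1)` is `0` (i.e. for `x ∈ I k`, `x² − x ∈ I (k−1) → x ∈ I (k−1)`).
Then of any two nonzero orthogonal idempotents of `R`, one lies in `I 0`; in particular
the only idempotents of `R / I 0` are `0` and `1`. -/
theorem stmt15 {R : Type*} [Ring R] [IsNoetherianRing R] (n : ℕ)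
    (I : ℕ → TwoSidedIdeal R)
    (hchain : ∀ k, k < n → I k ≤ I (k + 1))
    (hproper : (1 : R) ∉ I n)
    (hRn : ∀ x : R, x * x - x ∈ I n → x ∈ I n ∨ 1 - x ∈ I n)
    (hIk : ∀ k, 1 ≤ k → k ≤ n → ∀ x ∈ I k, x * x - x ∈ I (k - 1) → x ∈ I (k - 1)) :
    (∀ e e' : R, e * e = e → e' * e' = e' → e ≠ 0 → e' ≠ 0 →
      e * e' = 0 → e' * e = 0 → e ∈ I 0 ∨ e' ∈ I 0) ∧
    (∀ x : R, x * x - x ∈ I 0 → x ∈ I 0 ∨ 1 - x ∈ I 0) := by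
  have hmono : ∀ k, k ≤ n → I 0 ≤ I k := by
    intro k hk
    induction k with
    | zero => exact le_refl _
    | succ m ih => exact (ih (Nat.le_of_succ_le hk)).trans (hchain m (Nat.lt_of_succ_le hk))
  have key : ∀ k, k ≤ n → ∀ x : R, x * x - x ∈ I 0 → x ∈ I k → x ∈ I 0 := by
    intro k
    induction k with
    | zero => intro _ x _ hx; exact hx
    | succ m ih =>
      intro hk x hx hxk
      exact ih (Nat.le_of_succ_le hk) x hx
        (hIk (m + 1) (Nat.le_add_left 1 m) hk x hxk (hmono m (Nat.le_of_succ_le hk) hx))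
  constructor
  · intro e e' he he' _ _ _ he'e
    rcases hRn e (by rw [he, sub_self]; exact (I n).zero_mem) with h | h
    · exact Or.inl (key n le_rfl e (by rw [he, sub_self]; exact (I 0).zero_mem) h)
    · right
      have hn : e' ∈ I n := by
        have := (I n).mul_mem_left e' _ h
        simpa [mul_sub, he'e, he'] using this
      exact key n le_rfl e' (by rw [he', sub_self]; exact (I 0).zero_mem) hn
  · intro x hx
    rcases hRn x (hmono n le_rfl hx) with h | h
    · exact Or.inl (key n le_rfl x hx h)
    · right
      have hx' : (1 - x) * (1 - x) - (1 - x) ∈ I 0 := by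
        have e : (1 - x) * (1 - x) - (1 - x) = x * x - x := by noncomm_ring
        rwa [e]
      exact key n le_rfl (1 - x) hx' h
end

section
/- Let R be a unital Noetherian ring with a chain of ideals I_0 ⊆ I_1 ⊆ ... ⊆ I_n ⊊ R such that idem(R/I_n) = {0,1} and idem(I_k/I_{k−1}) = {0} for k = 1,...,n. If {e_1, ..., e_r} is a maximal set of pairwise orthogonal primitive idempotents contained in I_0, then {e_1, ..., e_r, 1 − (e_1 + ... + e_r)} is a primitive decomposition of 1 in R. -/
/-- An idempotent of a ring is *primitive* if it cannot be written as the sum of two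
nonzero orthogonal idempotents (following the paper's convention, `0` is primitive). -/
def IsPrimitiveIdem {R : Type*} [Ring R] (e : R) : Prop :=
  e * e = e ∧ ¬ ∃ f g : R, f * f = f ∧ g * g = g ∧ f ≠ 0 ∧ g ≠ 0 ∧
    f * g = 0 ∧ g * f = 0 ∧ e = f + g

/-- Left annihilator of an element, as a left ideal. -/
def lAnnIdem {R : Type*} [Ring R] (f : R) : Ideal R where
  carrier := {x | x * f = 0}
  add_mem' := fun {a b} ha hb => by
    simp only [Set.mem_setOf_eq] at *
    rw [add_mul, ha, hb, add_zero]
  zero_mem' := by simp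
  smul_mem' := fun c x hx => by
    simp only [smul_eq_mul, Set.mem_setOf_eq] at *
    rw [mul_assoc, hx, mul_zero]

/-- In a Noetherian ring, every nonzero idempotent dominates a nonzero primitive
idempotent. -/
lemma exists_prim_sub {R : Type*} [Ring R] [IsNoetherianRing R] :
    ∀ f : R, f * f = f → f ≠ 0 →
      ∃ p : R, p ≠ 0 ∧ IsPrimitiveIdem p ∧ p * f = p ∧ f * p = p := by
  have wf : WellFounded (InvImage (· > ·) (lAnnIdem (R := R))) :=
    InvImage.wf _ (IsWellFounded.wf)
  intro f
  induction f using wf.induction with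
  | _ f ih =>
    intro hf h0
    by_cases hp : IsPrimitiveIdem f
    · exact ⟨f, h0, hp, hf, hf⟩
    · have hdec : ∃ f1 f2 : R, f1 * f1 = f1 ∧ f2 * f2 = f2 ∧ f1 ≠ 0 ∧ f2 ≠ 0 ∧
          f1 * f2 = 0 ∧ f2 * f1 = 0 ∧ f = f1 + f2 := by
        by_contra h
        exact hp ⟨hf, h⟩
      obtain ⟨f1, f2, h1, h2, hn1, hn2, h12, h21, heq⟩ := hdec
      have hf1f : f1 * f = f1 := by rw [heq, mul_add, h1, h12, add_zero]
      have hff1 : f * f1 = f1 := by rw [heq, add_mul, h1, h21, add_zero]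
      have hlt : InvImage (· > ·) (lAnnIdem (R := R)) f1 f := by
        show lAnnIdem f < lAnnIdem f1
        apply lt_of_le_of_ne
        · intro x hx
          have hx' : x * f = 0 := hx
          show x * f1 = 0
          rw [← hff1, ← mul_assoc, hx', zero_mul]
        · intro h
          have hmem2 : f2 ∈ lAnnIdem f1 := h21
          rw [← h] at hmem2
          have : f2 * f = 0 := hmem2
          rw [heq, mul_add, h21, h2, zero_add] at this
          exact hn2 this
      obtain ⟨p, hp0, hpp, hpf1, hf1p⟩ := ih f1 hlt h1 hn1
      refine ⟨p, hp0, hpp, ?_, ?_⟩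
      · rw [← hpf1, mul_assoc, hf1f]
      · rw [← hf1p, ← mul_assoc, hff1]

/-- Let `R` be unital Noetherian with a chain of two-sided ideals
`I 0 ⊆ … ⊆ I n ⊊ R` with `idem(R/I n) = {0,1}` and `idem(I k / I (k−1)) = {0}` for
`k = 1, …, n`.  If `e 1, …, e r` is a maximal set of pairwise orthogonal primitive
idempotents contained in `I 0`, then together with `1 − (e 1 + ⋯ + e r)` they form a
primitive decomposition of `1` in `R`. -/
theorem stmt16 {R : Type*} [Ring R] [IsNoetherianRing R] (n : ℕ)
    (I : ℕ → TwoSidedIdeal R)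
    (hchain : ∀ k, k < n → I k ≤ I (k + 1))
    (hproper : (1 : R) ∉ I n)
    (hRn : ∀ x : R, x * x - x ∈ I n → x ∈ I n ∨ 1 - x ∈ I n)
    (hIk : ∀ k, 1 ≤ k → k ≤ n → ∀ x ∈ I k, x * x - x ∈ I (k - 1) → x ∈ I (k - 1))
    (r : ℕ) (e : Fin r → R)
    (hmem : ∀ i, e i ∈ I 0)
    (hidem : ∀ i, e i * e i = e i)
    (hne : ∀ i, e i ≠ 0)
    (horth : ∀ i j, i ≠ j → e i * e j = 0)
    (hprim : ∀ i, IsPrimitiveIdem (e i))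
    (hmax : ¬ ∃ f : R, f ∈ I 0 ∧ f * f = f ∧ f ≠ 0 ∧ IsPrimitiveIdem f ∧
      ∀ i, f * e i = 0 ∧ e i * f = 0) :
    IsPrimitiveIdem (1 - ∑ i, e i) ∧
    (∀ i, e i * (1 - ∑ j, e j) = 0 ∧ (1 - ∑ j, e j) * e i = 0) ∧
    (∑ i, e i) + (1 - ∑ i, e i) = 1 := by
  set s : R := ∑ i, e i with hs
  -- basic facts about s
  have hes : ∀ i, e i * s = e i := by
    intro i
    rw [hs, Finset.mul_sum]
    rw [Finset.sum_eq_single i (fun j _ hj => horth i j (Ne.symm hj)) (by simp)]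
    exact hidem i
  have hse : ∀ i, s * e i = e i := by
    intro i
    rw [hs, Finset.sum_mul]
    rw [Finset.sum_eq_single i (fun j _ hj => horth j i hj) (by simp)]
    exact hidem i
  have hss : s * s = s := by
    rw [hs, Finset.sum_mul]
    exact Finset.sum_congr rfl fun i _ => hes i
  have hsI0 : s ∈ I 0 := by
    rw [hs]; exact sum_mem fun i _ => hmem i
  -- I 0 ≤ I k for k ≤ n
  have hle : ∀ k, k ≤ n → (I 0 : TwoSidedIdeal R) ≤ I k := by
    intro k
    induction k with
    | zero => intro _; exact le_refl _
    | succ m ihm =>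
      intro hmn
      exact le_trans (ihm (le_of_lt (Nat.lt_of_succ_le hmn)))
        (hchain m (Nat.lt_of_succ_le hmn))
  -- descent: idempotent in I m (m ≤ n) lies in I 0
  have hdesc : ∀ m, m ≤ n → ∀ f : R, f * f = f → f ∈ I m → f ∈ I 0 := by
    intro m
    induction m with
    | zero => intro _ f _ hf; exact hf
    | succ m ihm =>
      intro hmn f hff hf
      have : f ∈ I m := by
        have := hIk (m + 1) (Nat.succ_le_succ (Nat.zero_le m)) hmn f hf
          (by simp [hff])
        simpa using this
      exact ihm (le_of_lt (Nat.lt_of_succ_le hmn)) f hff this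
  -- the key contradiction: a nonzero idempotent f with f * s = s * f = 0 in I n
  have hkey : ∀ f : R, f * f = f → f ≠ 0 → f * s = 0 → s * f = 0 → f ∉ I n := by
    intro f hff hf0 hfs hsf hfIn
    have hfI0 : f ∈ I 0 := hdesc n (le_refl n) f hff hfIn
    obtain ⟨p, hp0, hpp, hpf, hfp⟩ := exists_prim_sub f hff hf0
    apply hmax
    refine ⟨p, ?_, hpp.1, hp0, hpp, fun i => ⟨?_, ?_⟩⟩
    · rw [← hpf]; exact (I 0).mul_mem_left p f hfI0
    · -- p * e i = 0
      have hfe : f * e i = 0 := by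
        rw [← hse i, ← mul_assoc, hfs, zero_mul]
      rw [← hpf, mul_assoc, hfe, mul_zero]
    · have hef : e i * f = 0 := by
        rw [← hes i, mul_assoc, hsf, mul_zero]
      rw [← hfp, ← mul_assoc, hef, zero_mul]
  refine ⟨⟨?_, ?_⟩, fun i => ⟨?_, ?_⟩, ?_⟩
  · -- idempotent
    rw [mul_sub, sub_mul, sub_mul, mul_one, one_mul, mul_one, hss]
    abel
  · -- primitivity
    rintro ⟨f, g, hff, hgg, hf0, hg0, hfg, hgf, heq⟩
    have hf1s : f * (1 - s) = f := by rw [heq, mul_add, hff, hfg, add_zero]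
    have h1sf : (1 - s) * f = f := by rw [heq, add_mul, hff, hgf, add_zero]
    have hfs : f * s = 0 := by
      have := hf1s; rw [mul_sub, mul_one, sub_eq_self] at this; exact this
    have hsf : s * f = 0 := by
      have := h1sf; rw [sub_mul, one_mul, sub_eq_self] at this; exact this
    have hg1s : g * (1 - s) = g := by rw [heq, mul_add, hgg, hgf, zero_add]
    have h1sg : (1 - s) * g = g := by rw [heq, add_mul, hgg, hfg, zero_add]
    have hgs : g * s = 0 := by
      have := hg1s; rw [mul_sub, mul_one, sub_eq_self] at this; exact this
    have hsg : s * g = 0 := by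
      have := h1sg; rw [sub_mul, one_mul, sub_eq_self] at this; exact this
    -- f or g lies in I n
    have hfcase := hRn f (by rw [hff, sub_self]; exact (I n).zero_mem)
    have hgcase := hRn g (by rw [hgg, sub_self]; exact (I n).zero_mem)
    rcases hfcase with hfIn | hfIn'
    · exact hkey f hff hf0 hfs hsf hfIn
    · rcases hgcase with hgIn | hgIn'
      · exact hkey g hgg hg0 hgs hsg hgIn
      · -- both 1 - f, 1 - g in I n, so 1 ∈ I n
        apply hproper
        have hsum : (1 - f) + (1 - g) ∈ I n := (I n).add_mem hfIn' hgIn'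
        have h1s : (1 - f) + (1 - g) = 1 + s := by
          have h' : f + g = 1 - s := heq.symm
          calc (1 - f) + (1 - g) = 1 + 1 - (f + g) := by abel
            _ = 1 + 1 - (1 - s) := by rw [h']
            _ = 1 + s := by abel
        rw [h1s] at hsum
        have hsn : s ∈ I n := hle n (le_refl n) hsI0
        have := (I n).sub_mem hsum hsn
        simpa using this
  · rw [mul_sub, mul_one, hes, sub_self]
  · rw [sub_mul, one_mul, hse, sub_self]
  · simp
end

section
/- Let Γ and X be finite groups, R a commutative integral domain in which no prime divisor of |Γ|·|X| is invertible, m ∈ R, and suppose 1 + m|X| is neither zero nor a unit in R. Let c = (1,1) + m·Σ_{x∈X}(1,x) ∈ R[Γ×X]. Then the ring R[Γ×X]_c, with multiplication a ·_c b = acb, has no nonzero idempotents. -/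
/-!
By Coleman's theorem `R[Γ × X]` has no idempotents besides `0` and `1`. If `a * c * a = a`, then
`a * c` and `c * a` are idempotent; if one of them is `0` then `a = a * c * a = 0`, and otherwise
`c` is a unit, hence so is its augmentation `1 + m * |X|`.

Coleman's theorem splits by the characteristic of `R`. In characteristic zero, over the fraction
field the trace of left multiplication by an idempotent `e` is both `|G| * e(1)` and the rank of
`e`, so for `e ≠ 0, 1` we get `|G| * e(1) = r` with `0 < r < |G|`, which makes a prime divisor of
`|G|` invertible in `R`. In characteristic `p` every prime other than `p` is a unit, so `G` is a
`p`-group, and its augmentation ideal is nil by induction on `|G|`: for a central `z` of order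
`p` the kernel of `R[G] → R[G/⟨z⟩]` is `R[G] * (z - 1)`, and `(z - 1)^p = z^p - 1 = 0`.
-/

lemma eq_zero_or_eq_one_of_ker_isNilpotent {A B : Type*} [Ring A] [Ring B] (f : A →+* B)
    (hf : ∀ x, f x = 0 → IsNilpotent x) (hB : ∀ e : B, IsIdempotentElem e → e = 0 ∨ e = 1)
    {e : A} (he : IsIdempotentElem e) : e = 0 ∨ e = 1 := by
  rcases hB (f e) (he.map f) with h | h
  · exact .inl (he.eq_zero_of_isNilpotent (hf e h))
  · refine .inr (sub_eq_zero.mp ?_).symm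
    exact he.one_sub.eq_zero_of_isNilpotent (hf _ (by rw [map_sub, map_one, h, sub_self]))

lemma isNilpotent_of_map_map_eq_zero {A B C : Type*} [Ring A] [Ring B] [Ring C] (f : A →+* B)
    (g : B →+* C) (hf : ∀ x, f x = 0 → IsNilpotent x) (hg : ∀ y, g y = 0 → IsNilpotent y)
    {x : A} (hx : g (f x) = 0) : IsNilpotent x := by
  obtain ⟨n, hn⟩ := hg (f x) hx
  obtain ⟨k, hk⟩ := hf (x ^ n) (by rw [map_pow, hn])
  exact ⟨n * k, by rw [pow_mul, hk]⟩

lemma exists_trace_lmul_eq_of_isIdempotentElem {K A : Type*} [Field K] [Ring A] [Algebra K A]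
    [FiniteDimensional K A] {e : A} (he : IsIdempotentElem e) (h0 : e ≠ 0) :
    ∃ r : ℕ, 0 < r ∧ LinearMap.trace K A (Algebra.lmul K A e) = r := by
  have hproj := LinearMap.IsIdempotentElem.isProj_range _ (he.map (Algebra.lmul K A))
  refine ⟨_, Nat.pos_of_ne_zero fun hr => h0 (Algebra.lmul_injective (R := K) ?_), hproj.trace⟩
  rwa [map_zero, ← LinearMap.range_eq_bot, ← Submodule.finrank_eq_zero]

lemma exists_prime_dvd_isUnit_of_natCast_mul_eq {R : Type*} [CommRing R] [IsDomain R]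
    [CharZero R] {n r : ℕ} (hr : 0 < r) (hrn : r < n) {a : R} (h : n * a = r) :
    ∃ p : ℕ, p.Prime ∧ p ∣ n ∧ IsUnit (p : R) := by
  obtain ⟨n', r', hcop, hn, hr'⟩ := Nat.exists_coprime n r
  have hg : 0 < n.gcd r := Nat.gcd_pos_of_pos_right n hr
  generalize n.gcd r = g at hn hr' hg
  subst hn hr'
  have h' : (n' : R) * a = r' := by
    rw [Nat.cast_mul, Nat.cast_mul, mul_right_comm] at h
    exact mul_right_cancel₀ (Nat.cast_ne_zero.mpr hg.ne') h
  have hunit : IsUnit (n' : R) := by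
    have := (Nat.isCoprime_iff_coprime.mpr hcop).intCast (R := R)
    push_cast at this
    exact this.isUnit_of_dvd' dvd_rfl ⟨a, h'.symm⟩
  have hn' : n' ≠ 1 := by
    rintro rfl
    obtain rfl : r' = 0 := Nat.lt_one_iff.mp (Nat.lt_of_mul_lt_mul_right hrn)
    simp at hr
  refine ⟨n'.minFac, Nat.minFac_prime hn', (Nat.minFac_dvd n').trans (dvd_mul_right n' g), ?_⟩
  exact isUnit_of_dvd_unit (Nat.cast_dvd_cast (Nat.minFac_dvd n')) hunit

namespace MonoidAlgebra

section Augmentation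

variable {R : Type*} [CommRing R] {G : Type*} [Group G]

variable (R G) in
noncomputable def augmentation : R[G] →ₐ[R] R := lift R R G 1

@[simp]
lemma augmentation_single (g : G) (r : R) : augmentation R G (single g r) = r := by
  simp [augmentation]

lemma augmentation_mapDomainRingHom {H : Type*} [Group H] (f : G →* H) (x : R[G]) :
    augmentation R H (mapDomainRingHom R f x) = augmentation R G x := by
  induction x using MonoidAlgebra.induction_linear with
  | zero => simp
  | add x y hx hy => simp only [map_add, hx, hy]
  | single g r => simp

lemma augmentation_injective [Subsingleton G] : Function.Injective (augmentation R G) := by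
  suffices h : ∀ x : R[G], x = single 1 (augmentation R G x) from
    fun x y hxy => by rw [h x, h y, hxy]
  intro x
  induction x using MonoidAlgebra.induction_linear with
  | zero => simp
  | add x y hx hy => rw [map_add, single_add, ← hx, ← hy]
  | single g r => rw [augmentation_single, Subsingleton.elim g 1]

lemma exists_mul_single_sub_one_eq {z : G} (hz : IsOfFinOrder z) (x : R[G]) :
    ∃ y, y * (single z 1 - 1) =
      x - mapDomain Quotient.out (mapDomain (QuotientGroup.mk (s := Subgroup.zpowers z)) x) := by
  induction x using MonoidAlgebra.induction_linear with
  | zero => exact ⟨0, by simp⟩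
  | add x x' hx hx' =>
    obtain ⟨y, hy⟩ := hx
    obtain ⟨y', hy'⟩ := hx'
    exact ⟨y + y', by rw [add_mul, hy, hy', mapDomain_add, mapDomain_add]; abel⟩
  | single g r =>
    set s := (g : G ⧸ Subgroup.zpowers z).out
    obtain ⟨n, hn : z ^ n = s⁻¹ * g⟩ : s⁻¹ * g ∈ Submonoid.powers z :=
      hz.mem_powers_iff_mem_zpowers.mpr (QuotientGroup.eq.mp (QuotientGroup.out_eq' _))
    refine ⟨single s r * ∑ j ∈ Finset.range n, single z 1 ^ j, ?_⟩
    rw [mul_assoc, geom_sum_mul, mul_sub, mul_one, single_pow, one_pow, single_mul_single,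
      mul_one, hn, mul_inv_cancel_left, mapDomain_single, mapDomain_single]

lemma isNilpotent_of_mapDomainRingHom_mk_eq_zero (p : ℕ) [Fact p.Prime] [CharP R p] {z : G}
    (hz : z ∈ Subgroup.center G) (hzp : z ^ p = 1) [(Subgroup.zpowers z).Normal] {x : R[G]}
    (hx : mapDomainRingHom R (QuotientGroup.mk' (Subgroup.zpowers z)) x = 0) :
    IsNilpotent x := by
  obtain ⟨y, hy⟩ := exists_mul_single_sub_one_eq
    (isOfFinOrder_iff_pow_eq_one.mpr ⟨p, Nat.Prime.pos Fact.out, hzp⟩) x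
  rw [mapDomainRingHom_apply, QuotientGroup.coe_mk'] at hx
  rw [hx, mapDomain_zero, sub_zero] at hy
  have : CharP R[G] p := charP_of_injective_algebraMap' R p
  have hcomm : Commute y (single z 1 - 1) :=
    ((single_commute (fun g => (Subgroup.mem_center_iff.mp hz g).symm) .one_left y).symm).sub_right
      (.one_right y)
  refine ⟨p, ?_⟩
  rw [← hy, hcomm.mul_pow, sub_pow_char_of_commute p (Commute.one_right _), single_pow, hzp,
    one_pow, one_pow, ← one_def, sub_self, mul_zero]

lemma isNilpotent_of_augmentation_eq_zero {p : ℕ} [Fact p.Prime] [CharP R p] [Finite G]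
    (hG : IsPGroup p G) {x : R[G]} (hx : augmentation R G x = 0) : IsNilpotent x := by
  induction h : Nat.card G using Nat.strong_induction_on generalizing G with
  | _ n ih =>
  rcases subsingleton_or_nontrivial G with hG1 | hG1
  · rw [augmentation_injective (hx.trans (map_zero _).symm)]
    exact IsNilpotent.zero
  obtain ⟨z, hzp⟩ : ∃ z : Subgroup.center G, orderOf z = p := by
    refine exists_prime_orderOf_dvd_card' p ?_
    have := hG.center_nontrivial
    exact ((hG.to_subgroup _).card_eq_or_dvd).resolve_left Finite.one_lt_card.ne'
  have hzc : (z : G) ∈ Subgroup.center G := z.2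
  rw [← Subgroup.orderOf_coe] at hzp
  have : (Subgroup.zpowers (z : G)).Normal := ⟨fun a ha g => by
    rwa [Subgroup.mem_center_iff.mp (Subgroup.zpowers_le.mpr hzc ha) g, mul_inv_cancel_right]⟩
  have hcard : Nat.card (G ⧸ Subgroup.zpowers (z : G)) < n := by
    rw [← h, (Subgroup.zpowers (z : G)).card_eq_card_quotient_mul_card_subgroup, Nat.card_zpowers,
      hzp]
    exact lt_mul_of_one_lt_right Nat.card_pos (Nat.Prime.one_lt Fact.out)
  exact isNilpotent_of_map_map_eq_zero _ (augmentation R _).toRingHom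
    (fun y hy => isNilpotent_of_mapDomainRingHom_mk_eq_zero p hzc (hzp ▸ pow_orderOf_eq_one _) hy)
    (fun y hy => ih _ hcard (hG.to_quotient _) hy rfl) ((augmentation_mapDomainRingHom _ x).trans hx)

end Augmentation

section Trace

variable {K : Type*} [Field K] {G : Type*} [Group G] [Finite G]

lemma trace_lmul_eq_card_mul_coeff_one (e : K[G]) :
    LinearMap.trace K K[G] (Algebra.lmul K K[G] e) = Nat.card G * e.coeff 1 := by
  classical
  have := Fintype.ofFinite G
  rw [LinearMap.trace_eq_matrix_trace K (basis G K), Matrix.trace]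
  simp only [Matrix.diag_apply, LinearMap.toMatrix_apply, basis_apply, Algebra.coe_lmul_eq_mul,
    LinearMap.mul_apply']
  change ∑ g, (e * single g 1).coeff g = _
  simp

lemma exists_card_mul_coeff_one_eq [CharZero K] {e : K[G]} (he : IsIdempotentElem e)
    (h0 : e ≠ 0) (h1 : e ≠ 1) :
    ∃ r : ℕ, 0 < r ∧ r < Nat.card G ∧ (Nat.card G : K) * e.coeff 1 = r := by
  have : FiniteDimensional K K[G] := Module.Finite.of_basis (basis G K)
  obtain ⟨r, hr, htr⟩ := exists_trace_lmul_eq_of_isIdempotentElem (K := K) he h0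
  obtain ⟨r', hr', htr'⟩ :=
    exists_trace_lmul_eq_of_isIdempotentElem (K := K) he.one_sub (sub_ne_zero.mpr h1.symm)
  have hsum : (r + r' : K) = Nat.card G := by
    rw [← htr, ← htr', ← map_add, ← map_add, add_sub_cancel, map_one, LinearMap.trace_one,
      Module.finrank_eq_nat_card_basis (basis G K)]
  refine ⟨r, hr, ?_, by rw [← trace_lmul_eq_card_mul_coeff_one, htr]⟩
  have : r + r' = Nat.card G := by exact_mod_cast hsum
  omega

end Trace

section Coleman

variable {R : Type*} [CommRing R] [IsDomain R] {G : Type*} [Group G] [Finite G]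

theorem coleman_charP {p : ℕ} [Fact p.Prime] [CharP R p] (hG : IsPGroup p G) {e : R[G]}
    (he : IsIdempotentElem e) : e = 0 ∨ e = 1 :=
  eq_zero_or_eq_one_of_ker_isNilpotent (augmentation R G).toRingHom
    (fun _ hx => isNilpotent_of_augmentation_eq_zero hG hx)
    (fun _ => IsIdempotentElem.iff_eq_zero_or_one.mp) he

theorem coleman_charZero [CharZero R]
    (h : ∀ p : ℕ, p.Prime → p ∣ Nat.card G → ¬ IsUnit (p : R)) {e : R[G]}
    (he : IsIdempotentElem e) : e = 0 ∨ e = 1 := by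
  by_contra! ⟨h0, h1⟩
  let ι := mapRingHom G (algebraMap R (FractionRing R))
  have hι : Function.Injective ι :=
    map_injective (algebraMap R (FractionRing R)).toAddMonoidHom (IsFractionRing.injective _ _)
  obtain ⟨r, hr, hrn, heq⟩ := exists_card_mul_coeff_one_eq (he.map ι)
    (fun h => h0 (hι (by rw [h, map_zero]))) (fun h => h1 (hι (by rw [h, map_one])))
  obtain ⟨p, hp, hpn, hpu⟩ := exists_prime_dvd_isUnit_of_natCast_mul_eq hr hrn
    (a := e.coeff 1) (IsFractionRing.injective R (FractionRing R) (by simpa [ι] using heq))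
  exact h p hp hpn hpu

theorem coleman (h : ∀ p : ℕ, p.Prime → p ∣ Nat.card G → ¬ IsUnit (p : R)) {e : R[G]}
    (he : IsIdempotentElem e) : e = 0 ∨ e = 1 := by
  obtain ⟨p, hchar⟩ := CharP.exists R
  rcases CharP.char_is_prime_or_zero R p with hp | rfl
  · have := Fact.mk hp
    refine coleman_charP ?_ he
    rw [isPGroup_iff_primeFactors_card_subset hp.ne_zero, hp.primeFactors]
    intro q hq
    obtain ⟨hq, hqG, -⟩ := Nat.mem_primeFactors.mp hq
    by_contra hqp
    refine h q hq hqG ((CharP.isUnit_natCast_iff hp).mpr fun hpq => hqp ?_)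
    exact Finset.mem_singleton.mpr ((Nat.prime_dvd_prime_iff_eq hp hq).mp hpq).symm
  · have := CharP.charP_to_charZero R
    exact coleman_charZero h he

end Coleman

end MonoidAlgebra

theorem stmt17_general {Γ X : Type*} [Group Γ] [Group X] [Fintype Γ] [Fintype X]
    {R : Type*} [CommRing R] [IsDomain R]
    (hprime : ∀ q : ℕ, q.Prime → q ∣ Fintype.card Γ * Fintype.card X →
      ¬ IsUnit (q : R))
    (m : R)
    (hunit : ¬ IsUnit ((1 : R) + m * Fintype.card X))
    (c : MonoidAlgebra R (Γ × X))
    (hc : c = 1 + m • ∑ x : X, MonoidAlgebra.of R (Γ × X) (1, x)) :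
    ∀ a : MonoidAlgebra R (Γ × X), a * c * a = a → a = 0 := by
  intro a ha
  have hcard : ∀ q : ℕ, q.Prime → q ∣ Nat.card (Γ × X) → ¬ IsUnit (q : R) := by
    simpa [Nat.card_prod, Nat.card_eq_fintype_card] using hprime
  have hac : IsIdempotentElem (a * c) := by rw [IsIdempotentElem, ← mul_assoc, ha]
  have hca : IsIdempotentElem (c * a) := by rw [IsIdempotentElem, mul_assoc, ← mul_assoc a, ha]
  rcases MonoidAlgebra.coleman hcard hac with hac0 | hac1
  · rw [← ha, hac0, zero_mul]
  rcases MonoidAlgebra.coleman hcard hca with hca0 | hca1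
  · rw [← ha, mul_assoc, hca0, mul_zero]
  refine absurd ?_ hunit
  convert (isUnit_iff_exists.mpr ⟨a, hca1, hac1⟩).map (MonoidAlgebra.augmentation R (Γ × X))
  simp [hc]

/-- Let `Γ, X` be finite groups, `R` a commutative integral domain in
which no prime divisor of `|Γ|·|X|` is invertible, `m ∈ R`, and suppose `1 + m·|X|` is
neither zero nor a unit.  Let `c = (1,1) + m·Σ_{x∈X}(1,x) ∈ R[Γ×X]`.  Then the ring
`R[Γ×X]_c` (multiplication `a ·_c b = a*c*b`) has no nonzero idempotents. -/
theorem stmt17 {Γ X : Type*} [Group Γ] [Group X] [Fintype Γ] [Fintype X]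
    {R : Type*} [CommRing R] [IsDomain R]
    (hprime : ∀ q : ℕ, q.Prime → q ∣ Fintype.card Γ * Fintype.card X →
      ¬ IsUnit (q : R))
    (m : R)
    (hzero : (1 : R) + m * Fintype.card X ≠ 0)
    (hunit : ¬ IsUnit ((1 : R) + m * Fintype.card X))
    (c : MonoidAlgebra R (Γ × X))
    (hc : c = 1 + m • ∑ x : X, MonoidAlgebra.of R (Γ × X) (1, x)) :
    ∀ a : MonoidAlgebra R (Γ × X), a * c * a = a → a = 0 :=
  stmt17_general hprime m hunit c hc
end
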